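/- Let d ≥ 3 and p ≥ n > d/2 be real. Consider on the torus T^d the divergence-free mean-zero fields v := i·e₂ (e_{a} − e_{−a}) and w := i·e₃ (e_{b} − e_{−b}), where a, b are the first two standard basis vectors of ℤ^d, e₂, e₃ the second and third standard basis vectors of ℝ^d, and e_k(x) := e^{i k·x}/(2π)^{d/2}. Then ‖v‖_m = ‖w‖_m = √2 for every real m, and the Leray-projected advection P(v,w) := Π(v·∂w) satisfies ‖P(v,w)‖_p = 2^{p/2+1}/(2π)^{d/2}. Consequently the sharp constant K_{pn} in the tame inequality ‖P(v,w)‖_p ≤ (K_{pn}/2)(‖v‖_p‖w‖_{n+1} + ‖v‖_n‖w‖_{p+1}) satisfies K_{pn} ≥ 2^{p/2}/(2π)^{d/2}. -/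

import Mathlib

open scoped BigOperators
noncomputable section

/-- Euclidean norm of a lattice point of `ℤ^d`. -/
def latNorm {d : ℕ} (k : Fin d → ℤ) : ℝ := Real.sqrt (∑ i, ((k i : ℝ)) ^ 2)

/-- Euclidean norm of a vector of `ℂ^d`. -/
def cNorm {d : ℕ} (a : Fin d → ℂ) : ℝ := Real.sqrt (∑ i, ‖a i‖ ^ 2)

/-- A divergence-free mean-zero vector field on the torus `T^d = (ℝ/2πℤ)^d` is represented
by the family of its Fourier coefficients `v_k ∈ ℂ^d`, `k ∈ ℤ^d`. -/
def Coeff (d : ℕ) := (Fin d → ℤ) → (Fin d → ℂ)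

/-- Bilinear dot product `k · a` of a lattice vector with a vector of `ℂ^d`. -/
def dotC {d : ℕ} (k : Fin d → ℤ) (a : Fin d → ℂ) : ℂ := ∑ i, (k i : ℂ) * a i

/-- The projection `Π_k` of `ℂ^d` onto `k^⊥`: `Π_k c = c - ((k·c)/|k|²) k` for `k ≠ 0`,
and `Π_0 c = c`. -/
def leray {d : ℕ} (k : Fin d → ℤ) (a : Fin d → ℂ) : Fin d → ℂ :=
  if k = 0 then a else fun i => a i - dotC k a / (latNorm k : ℂ) ^ 2 * (k i : ℂ)

/-- The Sobolev norm of order `m`: `‖v‖_m² = Σ_{k ≠ 0} |k|^{2m} |v_k|²`. -/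
def sobNorm {d : ℕ} (m : ℝ) (v : Coeff d) : ℝ :=
  Real.sqrt (∑' k : {k : Fin d → ℤ // k ≠ 0},
    latNorm (k : Fin d → ℤ) ^ (2 * m) * cNorm (v (k : Fin d → ℤ)) ^ 2)

/-- Membership in the Sobolev space `H^m` (finiteness of the norm). -/
def inHm {d : ℕ} (m : ℝ) (v : Coeff d) : Prop :=
  Summable (fun k : {k : Fin d → ℤ // k ≠ 0} =>
    latNorm (k : Fin d → ℤ) ^ (2 * m) * cNorm (v (k : Fin d → ℤ)) ^ 2)

/-- Divergence-free: `k · v_k = 0` for all `k`. -/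
def divFree {d : ℕ} (v : Coeff d) : Prop := ∀ k, dotC k (v k) = 0

/-- Mean zero: `v_0 = 0`. -/
def meanZero {d : ℕ} (v : Coeff d) : Prop := v 0 = 0

/-- Reality of the field: `v_{-k} = conj(v_k)`. -/
def realField {d : ℕ} (v : Coeff d) : Prop :=
  ∀ k i, v (-k) i = starRingEnd ℂ (v k i)

/-- The Fourier coefficients of the Leray-projected advection term `P(v,w) = Π(v·∂w)`:
`P(v,w)_k = (i/(2π)^{d/2}) Σ_h (v_h · (k-h)) Π_k w_{k-h}`. -/
def Pcoef {d : ℕ} (v w : Coeff d) : Coeff d := fun k i =>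
  Complex.I / ((2 * Real.pi : ℝ) ^ ((d : ℝ) / 2) : ℝ) *
    ∑' h : Fin d → ℤ, dotC (k - h) (v h) * leray k (w (k - h)) i

/-- `K` is an admissible constant for the tame inequality
`‖P(v,w)‖_p ≤ (K/2)(‖v‖_p ‖w‖_{n+1} + ‖v‖_n ‖w‖_{p+1})` over all divergence-free
mean-zero real fields `v ∈ H^p`, `w ∈ H^{p+1}`. -/
def tameIneq (d : ℕ) (p n K : ℝ) : Prop :=
  ∀ v w : Coeff d, divFree v → divFree w → meanZero v → meanZero w →
    realField v → realField w → inHm p v → inHm (p + 1) w →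
    sobNorm p (Pcoef v w) ≤
      K / 2 * (sobNorm p v * sobNorm (n + 1) w + sobNorm n v * sobNorm (p + 1) w)

/-!
Both fields are single antipodal Fourier pairs `c e_a - c e_{-a}`, so every norm is a finite
sum. Advecting the pair `±a` (amplitude `i e₂`) by the pair `±b` (amplitude `i e₃`) excites
exactly the four modes `±a ± b`, all of length `√2`, with amplitudes of modulus `(2π)^{-d/2}`
along `e₃`; the projection leaves them alone because `e₃ ⊥ a, b`. Hence
`‖P(v,w)‖_p² = 4 · 2^p (2π)^{-d}`, whereas the right-hand side of the tame inequality is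
`(K/2)(2 + 2) = 2K`.
-/

open Complex

section Lattice

variable {d : ℕ}

lemma latNorm_neg (k : Fin d → ℤ) : latNorm (-k) = latNorm k := by
  simp [latNorm]

lemma latNorm_single (i : Fin d) (s : ℤ) : latNorm (Pi.single i s) = |s| := by
  rw [latNorm, Finset.sum_eq_single i (fun j _ hj => by simp [hj]) (by simp)]
  simp [Real.sqrt_sq_eq_abs]

lemma latNorm_single_add_single {i j : Fin d} (hij : i ≠ j) (s t : ℤ) :
    latNorm (Pi.single i s + Pi.single j t) = √((s : ℝ) ^ 2 + (t : ℝ) ^ 2) := by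
  have hsq : ∀ l : Fin d, (((Pi.single i s + Pi.single j t : Fin d → ℤ) l : ℤ) : ℝ) ^ 2 =
      (Pi.single i ((s : ℝ) ^ 2) : Fin d → ℝ) l + (Pi.single j ((t : ℝ) ^ 2) : Fin d → ℝ) l := by
    intro l
    by_cases hi : l = i
    · subst hi; simp [hij]
    · by_cases hj : l = j
      · subst hj; simp [hi]
      · simp [hi, hj]
  simp only [latNorm, hsq, Finset.sum_add_distrib, Finset.sum_pi_single', Finset.mem_univ,
    if_true]

end Lattice

section Vectors

variable {d : ℕ}

lemma cNorm_zero : cNorm (0 : Fin d → ℂ) = 0 := by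
  simp [cNorm]

lemma cNorm_neg (c : Fin d → ℂ) : cNorm (-c) = cNorm c := by
  simp [cNorm]

lemma cNorm_single (j : Fin d) (z : ℂ) : cNorm (Pi.single j z) = ‖z‖ := by
  rw [cNorm, Finset.sum_eq_single j (fun l _ hl => by simp [hl]) (by simp)]
  simp

lemma dotC_zero_right (k : Fin d → ℤ) : dotC k 0 = 0 := by
  simp [dotC]

lemma dotC_neg_left (k : Fin d → ℤ) (c : Fin d → ℂ) : dotC (-k) c = -dotC k c := by
  simp [dotC]

lemma dotC_neg_right (k : Fin d → ℤ) (c : Fin d → ℂ) : dotC k (-c) = -dotC k c := by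
  simp [dotC]

lemma dotC_add_left (k l : Fin d → ℤ) (c : Fin d → ℂ) :
    dotC (k + l) c = dotC k c + dotC l c := by
  simp [dotC, add_mul, Finset.sum_add_distrib]

lemma dotC_smul_right (k : Fin d → ℤ) (z : ℂ) (c : Fin d → ℂ) :
    dotC k (z • c) = z * dotC k c := by
  simp [dotC, Finset.mul_sum, mul_left_comm]

lemma dotC_single_right (k : Fin d → ℤ) (j : Fin d) (z : ℂ) :
    dotC k (Pi.single j z) = k j * z := by
  rw [dotC, Finset.sum_eq_single j (fun l _ hl => by simp [hl]) (by simp)]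
  simp

lemma leray_of_dotC_eq_zero {k : Fin d → ℤ} {c : Fin d → ℂ} (h : dotC k c = 0) :
    leray k c = c := by
  unfold leray
  split_ifs
  · rfl
  · simp [h]

lemma leray_zero (k : Fin d → ℤ) : leray k 0 = 0 :=
  leray_of_dotC_eq_zero (dotC_zero_right k)

lemma leray_smul (k : Fin d → ℤ) (z : ℂ) (c : Fin d → ℂ) :
    leray k (z • c) = z • leray k c := by
  unfold leray
  split_ifs
  · rfl
  · funext i
    simp [dotC_smul_right]
    ring

end Vectors

section Sobolev

variable {d : ℕ}

lemma inHm_of_eq_zero_of_notMem {m : ℝ} {v : Coeff d} (s : Finset (Fin d → ℤ))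
    (hv : ∀ k ∉ s, v k = 0) : inHm m v := by
  refine summable_of_hasFiniteSupport
    ((s.finite_toSet.preimage Subtype.val_injective.injOn).subset ?_)
  intro k hk
  by_contra hks
  exact hk (by simp [hv k hks, cNorm_zero])

lemma sobNorm_sq (m : ℝ) (v : Coeff d) :
    sobNorm m v ^ 2 = ∑' k : {k : Fin d → ℤ // k ≠ 0},
      latNorm (k : Fin d → ℤ) ^ (2 * m) * cNorm (v (k : Fin d → ℤ)) ^ 2 :=
  Real.sq_sqrt (tsum_nonneg fun k => by unfold latNorm; positivity)

lemma sobNorm_eq_sqrt_sum {m : ℝ} {v : Coeff d} (s : Finset (Fin d → ℤ)) (hs : 0 ∉ s)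
    (hv : ∀ k ∉ s, v k = 0) :
    sobNorm m v = √(∑ k ∈ s, latNorm k ^ (2 * m) * cNorm (v k) ^ 2) := by
  rw [sobNorm, tsum_eq_sum (s := s.subtype (· ≠ 0))
      fun k hk => by simp [hv k (by simpa using hk), cNorm_zero]]
  exact congrArg _ (Finset.sum_subtype_of_mem (fun k => latNorm k ^ (2 * m) * cNorm (v k) ^ 2)
    fun k hk => by rintro rfl; exact hs hk)

lemma sobNorm_add_sq {m : ℝ} {v w : Coeff d} (hv : inHm m v) (hw : inHm m w)
    (hvw : ∀ k, v k = 0 ∨ w k = 0) :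
    sobNorm m (fun k => v k + w k) ^ 2 = sobNorm m v ^ 2 + sobNorm m w ^ 2 := by
  have hpt : ∀ k, cNorm (v k + w k) ^ 2 = cNorm (v k) ^ 2 + cNorm (w k) ^ 2 := fun k => by
    rcases hvw k with h | h <;> simp [h, cNorm_zero]
  have hsum : inHm m (fun k => v k + w k) := by
    simpa only [inHm, hpt, mul_add] using hv.add hw
  rw [sobNorm_sq m v, sobNorm_sq m w, sobNorm_sq m (fun k => v k + w k),
    ← Summable.tsum_add hv hw]
  simp only [hpt, mul_add]

end Sobolev

section AntipodalMode

variable {d : ℕ}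

/-- The Fourier coefficients of the field `c e_a - c e_{-a}`. -/
def antipodalMode (a : Fin d → ℤ) (c : Fin d → ℂ) : Coeff d :=
  fun k => if k = a then c else if k = -a then -c else 0

variable {a : Fin d → ℤ} {c : Fin d → ℂ}

lemma antipodalMode_self : antipodalMode a c a = c := if_pos rfl

lemma antipodalMode_neg (ha : a ≠ 0) : antipodalMode a c (-a) = -c := by
  simp [antipodalMode, neg_eq_self.not.2 ha]

lemma antipodalMode_of_ne {k : Fin d → ℤ} (h₁ : k ≠ a) (h₂ : k ≠ -a) :
    antipodalMode a c k = 0 := by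
  simp [antipodalMode, h₁, h₂]

lemma antipodalMode_eq_zero_of_notMem {k : Fin d → ℤ} (hk : k ∉ ({a, -a} : Finset _)) :
    antipodalMode a c k = 0 := by
  simp only [Finset.mem_insert, Finset.mem_singleton, not_or] at hk
  exact antipodalMode_of_ne hk.1 hk.2

lemma meanZero_antipodalMode (ha : a ≠ 0) : meanZero (antipodalMode a c) :=
  antipodalMode_of_ne ha.symm (by simpa [eq_comm] using ha)

lemma divFree_antipodalMode (hc : dotC a c = 0) : divFree (antipodalMode a c) := by
  intro k
  unfold antipodalMode
  split_ifs with h₁ h₂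
  · rw [h₁, hc]
  · rw [h₂, dotC_neg_left, dotC_neg_right, neg_neg, hc]
  · exact dotC_zero_right k

lemma realField_antipodalMode (ha : a ≠ 0) (hc : ∀ i, starRingEnd ℂ (c i) = -c i) :
    realField (antipodalMode a c) := by
  intro k i
  by_cases h₁ : k = a
  · subst h₁; simp [antipodalMode_neg ha, antipodalMode_self, hc]
  by_cases h₂ : k = -a
  · subst h₂; simp [antipodalMode_neg ha, antipodalMode_self, hc]
  · rw [antipodalMode_of_ne h₁ h₂, antipodalMode_of_ne (by grind) (by grind)]
    simp

lemma inHm_antipodalMode (m : ℝ) : inHm m (antipodalMode a c) :=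
  inHm_of_eq_zero_of_notMem _ fun _ => antipodalMode_eq_zero_of_notMem

lemma sobNorm_antipodalMode (ha : a ≠ 0) (m : ℝ) :
    sobNorm m (antipodalMode a c) = √2 * latNorm a ^ m * cNorm c := by
  have h0 : (0 : Fin d → ℤ) ∉ ({a, -a} : Finset _) := by
    simpa [eq_comm, neg_eq_zero] using ha
  rw [sobNorm_eq_sqrt_sum _ h0 fun _ => antipodalMode_eq_zero_of_notMem,
    Finset.sum_pair (Ne.symm (neg_eq_self.not.2 ha)), antipodalMode_self, antipodalMode_neg ha,
    latNorm_neg, cNorm_neg, ← two_mul, Real.sqrt_mul zero_le_two]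
  have hlat : 0 ≤ latNorm a := Real.sqrt_nonneg _
  have hc : 0 ≤ cNorm c := Real.sqrt_nonneg _
  rw [mul_comm 2 m, Real.rpow_mul hlat, Real.rpow_two, ← mul_pow,
    Real.sqrt_sq (by positivity), mul_assoc]

lemma dotC_smul_antipodalMode (b x : Fin d → ℤ) (e : Fin d → ℂ) :
    dotC x c • antipodalMode b e x = if x = b ∨ x = -b then dotC b c • e else 0 := by
  by_cases h₁ : x = b
  · subst h₁; simp [antipodalMode_self]
  by_cases h₂ : x = -b
  · subst h₂; simp [antipodalMode, h₁, dotC_neg_left]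
  · simp [antipodalMode_of_ne h₁ h₂, h₁, h₂]

end AntipodalMode

section Advection

def advectionConst (d : ℕ) : ℂ := I / ((2 * Real.pi : ℝ) ^ ((d : ℝ) / 2) : ℝ)

variable {d : ℕ} {a b : Fin d → ℤ} {c e : Fin d → ℂ}

lemma Pcoef_antipodalMode_left (ha : a ≠ 0) (w : Coeff d) (k : Fin d → ℤ) :
    Pcoef (antipodalMode a c) w k = advectionConst d •
      (leray k (dotC (k - a) c • w (k - a)) - leray k (dotC (k + a) c • w (k + a))) := by
  funext i
  rw [Pcoef, tsum_eq_sum (s := {a, -a}) fun h hh => by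
      rw [antipodalMode_eq_zero_of_notMem hh, dotC_zero_right, zero_mul],
    Finset.sum_pair (Ne.symm (neg_eq_self.not.2 ha)), antipodalMode_self, antipodalMode_neg ha,
    sub_neg_eq_add, dotC_neg_right, leray_smul, leray_smul]
  simp only [advectionConst, Pi.smul_apply, Pi.sub_apply, smul_eq_mul]
  ring

lemma Pcoef_antipodalMode (ha : a ≠ 0) (hb : b ≠ 0) (hab : a ≠ b) (hab' : a ≠ -b)
    (hae : dotC a e = 0) (hbe : dotC b e = 0) :
    Pcoef (antipodalMode a c) (antipodalMode b e) = fun k =>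
      antipodalMode (a + b) ((advectionConst d * dotC b c) • e) k +
      antipodalMode (a - b) ((advectionConst d * dotC b c) • e) k := by
  funext k
  have hleray : (k = a + b ∨ k = a - b ∨ k = -(a - b) ∨ k = -(a + b)) →
      leray k (dotC b c • e) = dotC b c • e := by
    intro hk
    refine leray_of_dotC_eq_zero ?_
    rcases hk with rfl | rfl | rfl | rfl <;>
      simp [dotC_smul_right, sub_eq_add_neg, dotC_add_left, dotC_neg_left, hae, hbe]
  have hab₀ : a + b ≠ 0 := by grind
  have hab₀' : a - b ≠ 0 := by grind
  rw [Pcoef_antipodalMode_left ha, dotC_smul_antipodalMode, dotC_smul_antipodalMode]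
  by_cases h₁ : k = a + b
  · subst h₁
    rw [if_pos (by grind), if_neg (by grind), hleray (by grind), leray_zero, sub_zero, smul_smul,
      antipodalMode_self, antipodalMode_of_ne (by grind) (by grind), add_zero]
  by_cases h₂ : k = a - b
  · subst h₂
    rw [if_pos (by grind), if_neg (by grind), hleray (by grind), leray_zero, sub_zero, smul_smul,
      antipodalMode_self, antipodalMode_of_ne (by grind) (by grind), zero_add]
  by_cases h₃ : k = -(a - b)
  · subst h₃
    rw [if_neg (by grind), if_pos (by grind), hleray (by grind), leray_zero, zero_sub, smul_neg,
      smul_smul, antipodalMode_neg hab₀', antipodalMode_of_ne (by grind) (by grind), zero_add]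
  by_cases h₄ : k = -(a + b)
  · subst h₄
    rw [if_neg (by grind), if_pos (by grind), hleray (by grind), leray_zero, zero_sub, smul_neg,
      smul_smul, antipodalMode_neg hab₀, antipodalMode_of_ne (by grind) (by grind), add_zero]
  rw [if_neg (by grind), if_neg (by grind), leray_zero, sub_zero, smul_zero,
    antipodalMode_of_ne h₁ h₄, antipodalMode_of_ne h₂ h₃, add_zero]

lemma sobNorm_Pcoef_antipodalMode_sq (ha : a ≠ 0) (hb : b ≠ 0) (hab : a ≠ b) (hab' : a ≠ -b)
    (hae : dotC a e = 0) (hbe : dotC b e = 0) (m : ℝ) :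
    sobNorm m (Pcoef (antipodalMode a c) (antipodalMode b e)) ^ 2 =
      (√2 * latNorm (a + b) ^ m *
        cNorm ((advectionConst d * dotC b c) • e)) ^ 2 +
      (√2 * latNorm (a - b) ^ m *
        cNorm ((advectionConst d * dotC b c) • e)) ^ 2 := by
  rw [Pcoef_antipodalMode ha hb hab hab' hae hbe,
    sobNorm_add_sq (inHm_antipodalMode m) (inHm_antipodalMode m) fun k => ?_,
    sobNorm_antipodalMode (by grind), sobNorm_antipodalMode (by grind)]
  by_cases hk : k = a + b ∨ k = -(a + b)
  · exact Or.inr (antipodalMode_of_ne (by grind) (by grind))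
  · exact Or.inl (antipodalMode_of_ne (by grind) (by grind))

end Advection

section UnitModes

variable {d : ℕ} {i j l : Fin d}

lemma single_one_ne_zero (i : Fin d) : (Pi.single i 1 : Fin d → ℤ) ≠ 0 := by
  simp [Pi.single_eq_zero_iff]

lemma single_one_ne_single_one (hij : i ≠ j) :
    (Pi.single i 1 : Fin d → ℤ) ≠ Pi.single j 1 := fun h => by
  simpa [hij] using congrFun h i

lemma single_one_ne_neg_single_one (hij : i ≠ j) :
    (Pi.single i 1 : Fin d → ℤ) ≠ -Pi.single j 1 := fun h => by
  simpa [hij] using congrFun h i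

lemma dotC_single_one_single (i j : Fin d) (z : ℂ) :
    dotC (Pi.single i 1) (Pi.single j z) = if i = j then z else 0 := by
  rw [dotC_single_right]
  split_ifs with h <;> simp [h, Ne.symm]

lemma divFree_antipodalMode_single (hij : i ≠ j) :
    divFree (antipodalMode (Pi.single i 1) (Pi.single j I)) :=
  divFree_antipodalMode (by rw [dotC_single_one_single, if_neg hij])

lemma realField_antipodalMode_single (i j : Fin d) :
    realField (antipodalMode (Pi.single i 1) (Pi.single j I)) :=
  realField_antipodalMode (single_one_ne_zero i) fun l => by
    by_cases h : l = j
    · subst h; simp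
    · simp [h]

lemma sobNorm_antipodalMode_single (i j : Fin d) (m : ℝ) :
    sobNorm m (antipodalMode (Pi.single i 1) (Pi.single j I)) = √2 := by
  rw [sobNorm_antipodalMode (single_one_ne_zero i), latNorm_single, cNorm_single]
  simp

lemma fun_ite_coe_eq_piSingle {M : Type*} [Zero M] {r : ℕ} (hr : r < d) (x : M) :
    (fun i : Fin d => if (i : ℕ) = r then x else 0) = Pi.single ⟨r, hr⟩ x := by
  funext i
  simp [Pi.single_apply, Fin.ext_iff]

lemma antipodalMode_single_eq_ite {r : ℕ} (hr : r < d) (a : Fin d → ℤ) (z : ℂ) :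
    antipodalMode a (Pi.single ⟨r, hr⟩ z) = fun (k : Fin d → ℤ) (j : Fin d) =>
      if k = a ∧ (j : ℕ) = r then z else if k = -a ∧ (j : ℕ) = r then -z else 0 := by
  funext k j
  by_cases hj : (j : ℕ) = r
  · obtain rfl : j = ⟨r, hr⟩ := Fin.ext hj
    simp only [antipodalMode, and_true]
    split_ifs <;> simp
  · have hj' : j ≠ ⟨r, hr⟩ := fun h => hj (h ▸ rfl)
    simp only [antipodalMode, hj, and_false, if_false]
    split_ifs <;> simp [hj']

lemma sqrt_two_rpow (p : ℝ) : √2 ^ p = 2 ^ (p / 2) := by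
  rw [Real.sqrt_eq_rpow, ← Real.rpow_mul zero_le_two, one_div_mul_eq_div]

lemma sobNorm_Pcoef_antipodalMode_single (hij : i ≠ j) (hil : i ≠ l) (hjl : j ≠ l) (p : ℝ) :
    sobNorm p (Pcoef (antipodalMode (Pi.single i 1) (Pi.single j I))
      (antipodalMode (Pi.single j 1) (Pi.single l I))) =
      2 ^ (p / 2 + 1) / (2 * Real.pi) ^ ((d : ℝ) / 2) := by
  have hC : 0 < (2 * Real.pi) ^ ((d : ℝ) / 2) := by positivity
  have hg : cNorm ((advectionConst d * dotC (Pi.single j 1) (Pi.single j I)) •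
      (Pi.single l I : Fin d → ℂ)) = 1 / (2 * Real.pi) ^ ((d : ℝ) / 2) := by
    rw [dotC_single_one_single, if_pos rfl, ← Pi.single_smul, cNorm_single, smul_eq_mul]
    simp [advectionConst, abs_of_pos hC]
  have hlat : ∀ s : ℤ, s ^ 2 = 1 →
      latNorm (Pi.single i 1 + Pi.single j s : Fin d → ℤ) = √2 := fun s hs => by
    rw [latNorm_single_add_single hij]
    norm_num [← Int.cast_pow, hs]
  have hsq := sobNorm_Pcoef_antipodalMode_sq (c := Pi.single j I) (e := Pi.single l I)
    (single_one_ne_zero i) (single_one_ne_zero j)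
    (single_one_ne_single_one hij) (single_one_ne_neg_single_one hij)
    (by rw [dotC_single_one_single, if_neg hil]) (by rw [dotC_single_one_single, if_neg hjl]) p
  rw [hg, hlat 1 (one_pow 2), sub_eq_add_neg, ← Pi.single_neg, hlat (-1) (by norm_num),
    sqrt_two_rpow] at hsq
  refine (sq_eq_sq₀ (Real.sqrt_nonneg _) (by positivity)).1 (hsq.trans ?_)
  rw [Real.rpow_add two_pos, Real.rpow_one]
  field_simp
  rw [Real.sq_sqrt zero_le_two]
  ring

end UnitModes

lemma le_of_tameIneq {d : ℕ} (hd : 3 ≤ d) {p n K : ℝ} (hK : tameIneq d p n K) :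
    2 ^ (p / 2) / (2 * Real.pi) ^ ((d : ℝ) / 2) ≤ K := by
  obtain ⟨i, j, l, hij, hil, hjl⟩ : ∃ i j l : Fin d, i ≠ j ∧ i ≠ l ∧ j ≠ l :=
    ⟨⟨0, by omega⟩, ⟨1, by omega⟩, ⟨2, by omega⟩, by simp, by simp, by simp⟩
  have htame := hK (antipodalMode (Pi.single i 1) (Pi.single j I))
    (antipodalMode (Pi.single j 1) (Pi.single l I)) (divFree_antipodalMode_single hij)
    (divFree_antipodalMode_single hjl) (meanZero_antipodalMode (single_one_ne_zero i))
    (meanZero_antipodalMode (single_one_ne_zero j)) (realField_antipodalMode_single i j)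
    (realField_antipodalMode_single j l) (inHm_antipodalMode p) (inHm_antipodalMode (p + 1))
  simp only [sobNorm_Pcoef_antipodalMode_single hij hil hjl, sobNorm_antipodalMode_single,
    Real.mul_self_sqrt zero_le_two] at htame
  rw [Real.rpow_add two_pos, Real.rpow_one, div_le_iff₀ (by positivity)] at htame
  rw [div_le_iff₀ (by positivity)]
  linarith

theorem lower_bound_basic_trial_general (d : ℕ) (hd : 3 ≤ d) (p n : ℝ) (a b : Fin d → ℤ)
    (ha : a = fun (i : Fin d) => if (i : ℕ) = 0 then 1 else 0)
    (hb : b = fun (i : Fin d) => if (i : ℕ) = 1 then 1 else 0)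
    (V W : Coeff d)
    (hV : V = fun (k : Fin d → ℤ) (j : Fin d) =>
      if k = a ∧ (j : ℕ) = 1 then Complex.I
      else if k = -a ∧ (j : ℕ) = 1 then -Complex.I else 0)
    (hW : W = fun (k : Fin d → ℤ) (j : Fin d) =>
      if k = b ∧ (j : ℕ) = 2 then Complex.I
      else if k = -b ∧ (j : ℕ) = 2 then -Complex.I else 0) :
    (∀ m : ℝ, sobNorm m V = Real.sqrt 2 ∧ sobNorm m W = Real.sqrt 2) ∧
    sobNorm p (Pcoef V W) = 2 ^ (p / 2 + 1) / (2 * Real.pi) ^ ((d : ℝ) / 2) ∧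
    ∀ K : ℝ, tameIneq d p n K → 2 ^ (p / 2) / (2 * Real.pi) ^ ((d : ℝ) / 2) ≤ K := by
  rw [fun_ite_coe_eq_piSingle (by omega)] at ha hb
  rw [← antipodalMode_single_eq_ite (by omega)] at hV hW
  subst ha hb hV hW
  exact ⟨fun m => ⟨sobNorm_antipodalMode_single _ _ m, sobNorm_antipodalMode_single _ _ m⟩,
    sobNorm_Pcoef_antipodalMode_single (by simp) (by simp) (by simp) p,
    fun K => le_of_tameIneq hd⟩

/-- Let `d ≥ 3`, `p ≥ n > d/2`. With `a, b` the first two standard basis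
vectors of `ℤ^d` and `v = i e₂ (e_a - e_{-a})`, `w = i e₃ (e_b - e_{-b})` (in Fourier
coefficients: `V` is `i e₂` at `k = a`, `-i e₂` at `k = -a`, `0` otherwise, and similarly
`W` with `e₃` and `b`), one has `‖v‖_m = ‖w‖_m = √2` for all real `m`,
`‖P(v,w)‖_p = 2^{p/2+1}/(2π)^{d/2}`, and consequently every constant `K` fulfilling the
tame inequality satisfies `K ≥ 2^{p/2}/(2π)^{d/2}`. -/
theorem lower_bound_basic_trial (d : ℕ) (hd : 3 ≤ d) (p n : ℝ) (hpn : n ≤ p)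
    (hn : (d : ℝ) / 2 < n) (a b : Fin d → ℤ)
    (ha : a = fun (i : Fin d) => if (i : ℕ) = 0 then 1 else 0)
    (hb : b = fun (i : Fin d) => if (i : ℕ) = 1 then 1 else 0)
    (V W : Coeff d)
    (hV : V = fun (k : Fin d → ℤ) (j : Fin d) =>
      if k = a ∧ (j : ℕ) = 1 then Complex.I
      else if k = -a ∧ (j : ℕ) = 1 then -Complex.I else 0)
    (hW : W = fun (k : Fin d → ℤ) (j : Fin d) =>
      if k = b ∧ (j : ℕ) = 2 then Complex.I
      else if k = -b ∧ (j : ℕ) = 2 then -Complex.I else 0) :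
    (∀ m : ℝ, sobNorm m V = Real.sqrt 2 ∧ sobNorm m W = Real.sqrt 2) ∧
    sobNorm p (Pcoef V W) = 2 ^ (p / 2 + 1) / (2 * Real.pi) ^ ((d : ℝ) / 2) ∧
    ∀ K : ℝ, tameIneq d p n K → 2 ^ (p / 2) / (2 * Real.pi) ^ ((d : ℝ) / 2) ≤ K :=
  lower_bound_basic_trial_general d hd p n a b ha hb V W hV hW
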